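/- arXiv:2007.06056 — 7 statements merged into one kernel-verified Lean document; each statement's English description precedes it below -/
import Mathlib

section
/- Let n ≥ 1 and let (χ_j, γ_j) ∈ ℝ² for j = 1,…,n be the S₁-centric coordinates of a point set (so χ_1 = 0 and γ_1 = 0), and assume Σ_{j=1}^n χ_j ≠ 0. For each natural number k, define the least-squares error of the system in which S₁ is repeated k extra times by E_k(m, b) = k·b² + Σ_{j=1}^n (m·χ_j + b − γ_j)². If (m, b) ∈ ℝ² is a global minimizer of E_k, then m·χ̃ + b = γ̃, where χ̃ = (Σ_{j=1}^n χ_j²)/(Σ_{j=1}^n χ_j) and γ̃ = (Σ_{j=1}^n χ_j γ_j)/(Σ_{j=1}^n χ_j). In particular, the least-squares regression line passes through the pivot point (χ̃, γ̃) regardless of the number k of repetitions of S₁. -/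
/-!
The term `k b²` contributed by the repetitions of `S₁` does not depend on the slope `m`, so the
normal equation `∂E_k/∂m = 0`, i.e. `m Σ χ_j² + b Σ χ_j = Σ χ_j γ_j`, is the same for every `k`.
Dividing it by `Σ χ_j` says that the line passes through the pivot point.
-/

open Finset

theorem hasDerivAt_sum_sq_residual {ι : Type*} [Fintype ι] (x y : ι → ℝ) (b m : ℝ) :
    HasDerivAt (fun m' => ∑ j, (m' * x j + b - y j) ^ 2)
      (∑ j, 2 * (m * x j + b - y j) * x j) m := by
  refine HasDerivAt.fun_sum fun j _ => ?_
  simpa using ((((hasDerivAt_id m).mul_const (x j)).add_const b).sub_const (y j)).fun_pow 2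

theorem normal_equation_slope_of_isLocalMin {ι : Type*} [Fintype ι] (x y : ι → ℝ) (c b m : ℝ)
    (hmin : IsLocalMin (fun m' => c + ∑ j, (m' * x j + b - y j) ^ 2) m) :
    m * ∑ j, x j ^ 2 + b * ∑ j, x j = ∑ j, x j * y j := by
  have hderiv := hmin.hasDerivAt_eq_zero ((hasDerivAt_sum_sq_residual x y b m).const_add c)
  have hexpand : ∑ j, 2 * (m * x j + b - y j) * x j =
      2 * (m * ∑ j, x j ^ 2 + b * ∑ j, x j - ∑ j, x j * y j) := by
    simp only [mul_sum, ← sum_add_distrib, ← sum_sub_distrib]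
    exact sum_congr rfl fun j _ => by ring
  linarith [hexpand]

theorem stmt_0_general (n : ℕ) (χ γ : Fin n → ℝ)
    (hB : (∑ j, χ j) ≠ 0) (k : ℕ) (m b : ℝ)
    (hmin : ∀ m' b' : ℝ,
      (k : ℝ) * b ^ 2 + ∑ j, (m * χ j + b - γ j) ^ 2 ≤
      (k : ℝ) * b' ^ 2 + ∑ j, (m' * χ j + b' - γ j) ^ 2) :
    m * ((∑ j, (χ j) ^ 2) / (∑ j, χ j)) + b = (∑ j, χ j * γ j) / (∑ j, χ j) := by
  have hnormal := normal_equation_slope_of_isLocalMin χ γ ((k : ℝ) * b ^ 2) b m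
    (Filter.Eventually.of_forall fun m' => hmin m' b)
  field_simp
  linarith

/-- For S₁-centric coordinates (χ 0 = 0, γ 0 = 0) with ∑ χ_j ≠ 0,
any global minimizer (m, b) of the least-squares error with S₁ repeated k extra
times satisfies m·χ̃ + b = γ̃, where (χ̃, γ̃) is the pivot point. -/
theorem stmt_0 (n : ℕ) (hn : 1 ≤ n) (χ γ : Fin n → ℝ)
    (hχ1 : χ ⟨0, hn⟩ = 0) (hγ1 : γ ⟨0, hn⟩ = 0)
    (hB : (∑ j, χ j) ≠ 0) (k : ℕ) (m b : ℝ)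
    (hmin : ∀ m' b' : ℝ,
      (k : ℝ) * b ^ 2 + ∑ j, (m * χ j + b - γ j) ^ 2 ≤
      (k : ℝ) * b' ^ 2 + ∑ j, (m' * χ j + b' - γ j) ^ 2) :
    m * ((∑ j, (χ j) ^ 2) / (∑ j, χ j)) + b = (∑ j, χ j * γ j) / (∑ j, χ j) :=
  stmt_0_general n χ γ hB k m b hmin
end

section
/- Let S_j = (x_j, y_j) ∈ ℝ² for j = 1, 2, 3, 4 with x_1 ≤ x_2 ≤ x_3 ≤ x_4 and x_1 < x_4, and let δ_1, δ_2, δ_3, δ_4 > 0. Then the pivot point P_4 = (x̃_4, ỹ_4) of S_4, where x̃_4 = x_4 + (Σ_{j=1}^4 δ_j(x_j − x_4)²)/(Σ_{j=1}^4 δ_j(x_j − x_4)) and ỹ_4 = y_4 + (Σ_{j=1}^4 δ_j(x_j − x_4)(y_j − y_4))/(Σ_{j=1}^4 δ_j(x_j − x_4)), lies in the convex hull of {S_1, S_2, S_3}. That is, the pivot points corresponding to the rightmost point on the x-axis are bounded by the triangle whose vertices are the three other points, for every choice of positive repetition weights. -/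
/-
The pivot point of `S_i` is the centre of mass of the points `S_j` with the signed weights
`δ_j (x_j - x_i)`: indeed `c + (Σ u_j (v_j - c)) / Σ u_j = (Σ u_j v_j) / Σ u_j` for any `c`. When `S_i` lies
weakly to the right of every `S_j`, all these weights have the same sign, so the pivot point is a
genuine convex combination of the `S_j`; the point `S_4` itself gets weight `0` and drops out.
-/

open Finset

variable {ι : Type*}

noncomputable def pivot (s : Finset ι) (δ : ι → ℝ) (p : ι → ℝ × ℝ) (q : ℝ × ℝ) : ℝ × ℝ :=
  (q.1 + (∑ j ∈ s, δ j * ((p j).1 - q.1) ^ 2) / ∑ j ∈ s, δ j * ((p j).1 - q.1),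
    q.2 + (∑ j ∈ s, δ j * ((p j).1 - q.1) * ((p j).2 - q.2)) / ∑ j ∈ s, δ j * ((p j).1 - q.1))

theorem add_sum_mul_sub_div_sum (s : Finset ι) (u v : ι → ℝ) (c : ℝ) (hu : ∑ j ∈ s, u j ≠ 0) :
    c + (∑ j ∈ s, u j * (v j - c)) / ∑ j ∈ s, u j = (∑ j ∈ s, u j)⁻¹ * ∑ j ∈ s, u j * v j := by
  simp only [mul_sub, sum_sub_distrib, ← sum_mul]
  field_simp
  ring

theorem pivot_eq_centerMass (s : Finset ι) (δ : ι → ℝ) (p : ι → ℝ × ℝ) (q : ℝ × ℝ)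
    (hD : ∑ j ∈ s, δ j * ((p j).1 - q.1) ≠ 0) :
    pivot s δ p q = s.centerMass (fun j ↦ δ j * ((p j).1 - q.1)) p := by
  simp only [pivot, centerMass, Prod.ext_iff, Prod.smul_fst, Prod.smul_snd, Prod.fst_sum,
    Prod.snd_sum, smul_eq_mul, sq, ← mul_assoc]
  exact ⟨add_sum_mul_sub_div_sum s _ _ _ hD, add_sum_mul_sub_div_sum s _ _ _ hD⟩

theorem pivot_mem_convexHull (s : Finset ι) (δ : ι → ℝ) (p : ι → ℝ × ℝ) (q : ℝ × ℝ)
    (hδ : ∀ j ∈ s, 0 < δ j) (hle : ∀ j ∈ s, (p j).1 ≤ q.1) (hlt : ∃ j ∈ s, (p j).1 < q.1) :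
    pivot s δ p q ∈ convexHull ℝ (p '' s) := by
  set w : ι → ℝ := fun j ↦ δ j * ((p j).1 - q.1)
  have hw : ∀ j ∈ s, 0 ≤ (-w) j :=
    fun j hj ↦ by simpa [w, ← mul_neg] using mul_nonneg (hδ j hj).le (sub_nonneg.2 (hle j hj))
  have hws : 0 < ∑ j ∈ s, (-w) j := by
    obtain ⟨k, hk, hk_lt⟩ := hlt
    refine sum_pos' hw ⟨k, hk, ?_⟩
    simpa [w, ← mul_neg] using mul_pos (hδ k hk) (sub_pos.2 hk_lt)
  have hD : ∑ j ∈ s, w j ≠ 0 := by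
    simpa only [Pi.neg_apply, sum_neg_distrib, neg_ne_zero] using hws.ne'
  rw [pivot_eq_centerMass s δ p q hD, ← centerMass_neg_left]
  exact s.centerMass_mem_convexHull hw hws fun j hj ↦ Set.mem_image_of_mem p hj

theorem stmt_4_general (x₁ x₂ x₃ x₄ y₁ y₂ y₃ y₄ δ₁ δ₂ δ₃ δ₄ : ℝ)
    (h23 : x₂ ≤ x₃) (h34 : x₃ ≤ x₄) (h14 : x₁ < x₄)
    (hδ₁ : 0 < δ₁) (hδ₂ : 0 < δ₂) (hδ₃ : 0 < δ₃) :
    ((x₄ + (δ₁ * (x₁ - x₄) ^ 2 + δ₂ * (x₂ - x₄) ^ 2 + δ₃ * (x₃ - x₄) ^ 2 +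
              δ₄ * (x₄ - x₄) ^ 2) /
            (δ₁ * (x₁ - x₄) + δ₂ * (x₂ - x₄) + δ₃ * (x₃ - x₄) + δ₄ * (x₄ - x₄)),
      y₄ + (δ₁ * (x₁ - x₄) * (y₁ - y₄) + δ₂ * (x₂ - x₄) * (y₂ - y₄) +
              δ₃ * (x₃ - x₄) * (y₃ - y₄) + δ₄ * (x₄ - x₄) * (y₄ - y₄)) /
            (δ₁ * (x₁ - x₄) + δ₂ * (x₂ - x₄) + δ₃ * (x₃ - x₄) + δ₄ * (x₄ - x₄)))
        : ℝ × ℝ) ∈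
      convexHull ℝ ({(x₁, y₁), (x₂, y₂), (x₃, y₃)} : Set (ℝ × ℝ)) := by
  have key := pivot_mem_convexHull univ ![δ₁, δ₂, δ₃] ![(x₁, y₁), (x₂, y₂), (x₃, y₃)] (x₄, y₄)
    (by simp [Fin.forall_fin_succ, hδ₁, hδ₂, hδ₃])
    (by simp [Fin.forall_fin_succ, h14.le, h23.trans h34, h34]) ⟨0, mem_univ _, h14⟩
  rw [coe_univ, Set.image_univ, Matrix.range_cons, Matrix.range_cons_cons_empty,
    Set.singleton_union] at key
  simpa [pivot, Fin.sum_univ_three] using key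

/-- With four points ordered x₁ ≤ x₂ ≤ x₃ ≤ x₄, x₁ < x₄, and
positive weights, the pivot point of the rightmost point S₄ lies in the convex
hull (triangle) of the other three points S₁, S₂, S₃. -/
theorem stmt_4 (x₁ x₂ x₃ x₄ y₁ y₂ y₃ y₄ δ₁ δ₂ δ₃ δ₄ : ℝ)
    (h12 : x₁ ≤ x₂) (h23 : x₂ ≤ x₃) (h34 : x₃ ≤ x₄) (h14 : x₁ < x₄)
    (hδ₁ : 0 < δ₁) (hδ₂ : 0 < δ₂) (hδ₃ : 0 < δ₃) (hδ₄ : 0 < δ₄) :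
    ((x₄ + (δ₁ * (x₁ - x₄) ^ 2 + δ₂ * (x₂ - x₄) ^ 2 + δ₃ * (x₃ - x₄) ^ 2 +
              δ₄ * (x₄ - x₄) ^ 2) /
            (δ₁ * (x₁ - x₄) + δ₂ * (x₂ - x₄) + δ₃ * (x₃ - x₄) + δ₄ * (x₄ - x₄)),
      y₄ + (δ₁ * (x₁ - x₄) * (y₁ - y₄) + δ₂ * (x₂ - x₄) * (y₂ - y₄) +
              δ₃ * (x₃ - x₄) * (y₃ - y₄) + δ₄ * (x₄ - x₄) * (y₄ - y₄)) /
            (δ₁ * (x₁ - x₄) + δ₂ * (x₂ - x₄) + δ₃ * (x₃ - x₄) + δ₄ * (x₄ - x₄)))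
        : ℝ × ℝ) ∈
      convexHull ℝ ({(x₁, y₁), (x₂, y₂), (x₃, y₃)} : Set (ℝ × ℝ)) :=
  stmt_4_general x₁ x₂ x₃ x₄ y₁ y₂ y₃ y₄ δ₁ δ₂ δ₃ δ₄ h23 h34 h14 hδ₁ hδ₂ hδ₃
end

section
/- Let S_j = (x_j, y_j) ∈ ℝ² for j = 1, 2, 3, 4 with x_1 ≤ x_2 ≤ x_3 ≤ x_4 and x_1 < x_4, and let δ_1, δ_2, δ_3, δ_4 > 0. Then the pivot point P_1 = (x̃_1, ỹ_1) of S_1, where x̃_1 = x_1 + (Σ_{j=1}^4 δ_j(x_j − x_1)²)/(Σ_{j=1}^4 δ_j(x_j − x_1)) and ỹ_1 = y_1 + (Σ_{j=1}^4 δ_j(x_j − x_1)(y_j − y_1))/(Σ_{j=1}^4 δ_j(x_j − x_1)), lies in the convex hull of {S_2, S_3, S_4}. That is, the pivot points corresponding to the leftmost point on the x-axis are bounded by the triangle whose vertices are the three other points, for every choice of positive repetition weights. -/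
/-!
With weights `w j = δ j (x j - x i)`, the pivot point of `S i` is
`S i + (∑ w)⁻¹ • ∑ w j • (S j - S i)`, i.e. the center of mass of the points `S j` with weights
`w j`. For the leftmost point these weights are nonnegative, the weight of `S i` itself vanishes,
and the total weight is positive as soon as some point lies strictly to the right, so the pivot
point is a convex combination of the other points.
-/

open Finset

theorem Finset.add_inv_smul_sum_smul_sub_eq_centerMass {ι R E : Type*} [Field R] [AddCommGroup E]
    [Module R E] {t : Finset ι} {w : ι → R} (hw : ∑ j ∈ t, w j ≠ 0) (z : ι → E) (c : E) :
    c + (∑ j ∈ t, w j)⁻¹ • ∑ j ∈ t, w j • (z j - c) = t.centerMass w z := by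
  simp only [centerMass, smul_sub, sum_sub_distrib, ← sum_smul, inv_smul_smul₀ hw,
    add_sub_cancel]

section Pivot

variable {ι : Type*} (t : Finset ι) (δ : ι → ℝ) (S : ι → ℝ × ℝ) (i : ι)

noncomputable def pivotPoint : ℝ × ℝ :=
  ((S i).1 + (∑ j ∈ t, δ j * ((S j).1 - (S i).1) ^ 2) / ∑ j ∈ t, δ j * ((S j).1 - (S i).1),
    (S i).2 + (∑ j ∈ t, δ j * ((S j).1 - (S i).1) * ((S j).2 - (S i).2)) /
      ∑ j ∈ t, δ j * ((S j).1 - (S i).1))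

def pivotWeight (j : ι) : ℝ := δ j * ((S j).1 - (S i).1)

theorem pivotPoint_eq_add_smul_sum :
    pivotPoint t δ S i =
      S i + (∑ j ∈ t, pivotWeight δ S i j)⁻¹ • ∑ j ∈ t, pivotWeight δ S i j • (S j - S i) := by
  ext <;> simp [pivotPoint, pivotWeight, Prod.fst_sum, Prod.snd_sum, div_eq_inv_mul, sq, mul_assoc]

theorem pivotPoint_eq_centerMass (hw : ∑ j ∈ t, pivotWeight δ S i j ≠ 0) :
    pivotPoint t δ S i = t.centerMass (pivotWeight δ S i) S := by
  rw [pivotPoint_eq_add_smul_sum, add_inv_smul_sum_smul_sub_eq_centerMass hw]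

theorem pivotPoint_mem_convexHull [DecidableEq ι] {s : Set (ℝ × ℝ)}
    (hδ : ∀ j ∈ t, j ≠ i → 0 < δ j) (hleft : ∀ j ∈ t, (S i).1 ≤ (S j).1)
    (hright : ∃ j ∈ t, (S i).1 < (S j).1) (hs : ∀ j ∈ t, j ≠ i → S j ∈ s) :
    pivotPoint t δ S i ∈ convexHull ℝ s := by
  have hw₀ : ∀ j ∈ t.erase i, 0 ≤ pivotWeight δ S i j := fun j hj =>
    mul_nonneg (hδ j (mem_of_mem_erase hj) (ne_of_mem_erase hj)).le
      (sub_nonneg.2 (hleft j (mem_of_mem_erase hj)))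
  have hwi : pivotWeight δ S i i = 0 := by simp [pivotWeight]
  have hsum : ∑ j ∈ t.erase i, pivotWeight δ S i j = ∑ j ∈ t, pivotWeight δ S i j :=
    sum_erase t hwi
  have hpos : 0 < ∑ j ∈ t, pivotWeight δ S i j := by
    obtain ⟨k, hk, hik⟩ := hright
    have hki : k ≠ i := by rintro rfl; exact lt_irrefl _ hik
    rw [← hsum]
    exact sum_pos' hw₀ ⟨k, mem_erase.2 ⟨hki, hk⟩, mul_pos (hδ k hk hki) (sub_pos.2 hik)⟩
  rw [pivotPoint_eq_centerMass t δ S i hpos.ne',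
    ← centerMass_subset S (erase_subset i t) fun j hjt hj => by
      rwa [show j = i by simpa [hjt] using hj]]
  exact centerMass_mem_convexHull _ hw₀ (hsum ▸ hpos) fun j hj =>
    hs j (mem_of_mem_erase hj) (ne_of_mem_erase hj)

end Pivot

theorem stmt_5_general (x₁ x₂ x₃ x₄ y₁ y₂ y₃ y₄ δ₁ δ₂ δ₃ δ₄ : ℝ)
    (h12 : x₁ ≤ x₂) (h23 : x₂ ≤ x₃) (h14 : x₁ < x₄)
    (hδ₂ : 0 < δ₂) (hδ₃ : 0 < δ₃) (hδ₄ : 0 < δ₄) :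
    ((x₁ + (δ₁ * (x₁ - x₁) ^ 2 + δ₂ * (x₂ - x₁) ^ 2 + δ₃ * (x₃ - x₁) ^ 2 +
              δ₄ * (x₄ - x₁) ^ 2) /
            (δ₁ * (x₁ - x₁) + δ₂ * (x₂ - x₁) + δ₃ * (x₃ - x₁) + δ₄ * (x₄ - x₁)),
      y₁ + (δ₁ * (x₁ - x₁) * (y₁ - y₁) + δ₂ * (x₂ - x₁) * (y₂ - y₁) +
              δ₃ * (x₃ - x₁) * (y₃ - y₁) + δ₄ * (x₄ - x₁) * (y₄ - y₁)) /
            (δ₁ * (x₁ - x₁) + δ₂ * (x₂ - x₁) + δ₃ * (x₃ - x₁) + δ₄ * (x₄ - x₁)))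
        : ℝ × ℝ) ∈
      convexHull ℝ ({(x₂, y₂), (x₃, y₃), (x₄, y₄)} : Set (ℝ × ℝ)) := by
  have h := pivotPoint_mem_convexHull univ ![δ₁, δ₂, δ₃, δ₄]
    ![(x₁, y₁), (x₂, y₂), (x₃, y₃), (x₄, y₄)] 0 (s := {(x₂, y₂), (x₃, y₃), (x₄, y₄)})
    (by simp [Fin.forall_fin_succ, hδ₂, hδ₃, hδ₄])
    (fun j _ => by fin_cases j <;> simp <;> linarith)
    ⟨3, mem_univ _, h14⟩
    (by simp [Fin.forall_fin_succ])
  simpa [pivotPoint, Fin.sum_univ_four] using h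

/-- With four points ordered x₁ ≤ x₂ ≤ x₃ ≤ x₄, x₁ < x₄, and
positive weights, the pivot point of the leftmost point S₁ lies in the convex
hull (triangle) of the other three points S₂, S₃, S₄. -/
theorem stmt_5 (x₁ x₂ x₃ x₄ y₁ y₂ y₃ y₄ δ₁ δ₂ δ₃ δ₄ : ℝ)
    (h12 : x₁ ≤ x₂) (h23 : x₂ ≤ x₃) (h34 : x₃ ≤ x₄) (h14 : x₁ < x₄)
    (hδ₁ : 0 < δ₁) (hδ₂ : 0 < δ₂) (hδ₃ : 0 < δ₃) (hδ₄ : 0 < δ₄) :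
    ((x₁ + (δ₁ * (x₁ - x₁) ^ 2 + δ₂ * (x₂ - x₁) ^ 2 + δ₃ * (x₃ - x₁) ^ 2 +
              δ₄ * (x₄ - x₁) ^ 2) /
            (δ₁ * (x₁ - x₁) + δ₂ * (x₂ - x₁) + δ₃ * (x₃ - x₁) + δ₄ * (x₄ - x₁)),
      y₁ + (δ₁ * (x₁ - x₁) * (y₁ - y₁) + δ₂ * (x₂ - x₁) * (y₂ - y₁) +
              δ₃ * (x₃ - x₁) * (y₃ - y₁) + δ₄ * (x₄ - x₁) * (y₄ - y₁)) /
            (δ₁ * (x₁ - x₁) + δ₂ * (x₂ - x₁) + δ₃ * (x₃ - x₁) + δ₄ * (x₄ - x₁)))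
        : ℝ × ℝ) ∈
      convexHull ℝ ({(x₂, y₂), (x₃, y₃), (x₄, y₄)} : Set (ℝ × ℝ)) :=
  stmt_5_general x₁ x₂ x₃ x₄ y₁ y₂ y₃ y₄ δ₁ δ₂ δ₃ δ₄ h12 h23 h14 hδ₂ hδ₃ hδ₄
end

section
/- Let x_1, x_2, x_3, x_4 ∈ ℝ with x_1 ≤ x_2 ≤ x_3 ≤ x_4 and positive weights δ_1, δ_2, δ_3, δ_4 > 0. Fix i ∈ {1, 2, 3, 4}, write χ_j = x_j − x_i, assume D = Σ_{j ≠ i} δ_j·χ_j ≠ 0, and let (λ_a, λ_b, λ_c) be the barycentric coordinates λ_j = δ_j·χ_j/D of the pivot point P_i with respect to the other three points listed in increasing order of index (equivalently, of x-coordinate). Then it is never the case that (λ_a > 0 and λ_b < 0 and λ_c > 0), and never the case that (λ_a < 0 and λ_b > 0 and λ_c < 0). That is, with four points, a pivot point cannot lie in the (+,−,+) or (−,+,−) region of the triangle formed by the other three points. -/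
/-!
All three coordinates share the denominator `D`, so up to one global sign their signs are those of
the numerators `δ_j (x_j - x_i)`. As `x_a ≤ x_b ≤ x_c` and the weights are positive, the numerators
can change sign only once along `a, b, c` (from negative to positive), whereas both patterns
`(+,−,+)` and `(−,+,−)` change sign twice.
-/

section

variable {K : Type*} [Field K] [LinearOrder K] [IsStrictOrderedRing K]

theorem pos_mul_of_pos_mul_of_le {δ δ' u v : K} (hδ : 0 ≤ δ) (hδ' : 0 < δ') (huv : u ≤ v)
    (h : 0 < δ * u) : 0 < δ' * v :=
  mul_pos hδ' ((pos_of_mul_pos_right h hδ).trans_le huv)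

theorem not_pos_neg_pos_div {A B C : K} (hAB : 0 < A → 0 < B) (hBC : 0 < B → 0 < C) (D : K) :
    ¬ (0 < A / D ∧ B / D < 0 ∧ 0 < C / D) := by
  rintro ⟨hA, hB, hC⟩
  rcases lt_trichotomy D 0 with hD | rfl | hD
  · have hB' : 0 < B := by simpa using (div_lt_iff_of_neg hD).1 hB
    have hC' : C < 0 := by simpa using (lt_div_iff_of_neg hD).1 hC
    exact hC'.not_gt (hBC hB')
  · simp at hA
  · exact hB.not_gt (div_pos (hAB ((div_pos_iff_of_pos_right hD).1 hA)) hD)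

theorem not_neg_pos_neg_div {A B C : K} (hAB : 0 < A → 0 < B) (hBC : 0 < B → 0 < C) (D : K) :
    ¬ (A / D < 0 ∧ 0 < B / D ∧ C / D < 0) := by
  simpa [div_neg] using not_pos_neg_pos_div hAB hBC (-D)

end

theorem stmt_8_general (x δ : Fin 4 → ℝ) (hmono : Monotone x) (hδ : ∀ j, 0 < δ j)
    (i a b c : Fin 4) (hab : a < b) (hbc : b < c) :
    ¬ (0 < δ a * (x a - x i) / (δ a * (x a - x i) + δ b * (x b - x i) + δ c * (x c - x i)) ∧
       δ b * (x b - x i) / (δ a * (x a - x i) + δ b * (x b - x i) + δ c * (x c - x i)) < 0 ∧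
       0 < δ c * (x c - x i) / (δ a * (x a - x i) + δ b * (x b - x i) + δ c * (x c - x i))) ∧
    ¬ (δ a * (x a - x i) / (δ a * (x a - x i) + δ b * (x b - x i) + δ c * (x c - x i)) < 0 ∧
       0 < δ b * (x b - x i) / (δ a * (x a - x i) + δ b * (x b - x i) + δ c * (x c - x i)) ∧
       δ c * (x c - x i) / (δ a * (x a - x i) + δ b * (x b - x i) + δ c * (x c - x i)) < 0) := by
  have hAB := pos_mul_of_pos_mul_of_le (hδ a).le (hδ b) (sub_le_sub_right (hmono hab.le) (x i))
  have hBC := pos_mul_of_pos_mul_of_le (hδ b).le (hδ c) (sub_le_sub_right (hmono hbc.le) (x i))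
  exact ⟨not_pos_neg_pos_div hAB hBC _, not_neg_pos_neg_div hAB hBC _⟩

/-- With four x-monotonically-indexed points and positive weights,
for any index i and the other three indices a < b < c, the barycentric
coordinates (λ_a, λ_b, λ_c) of the pivot point P_i never exhibit the sign
pattern (+,−,+) or (−,+,−). -/
theorem stmt_8 (x δ : Fin 4 → ℝ) (hmono : Monotone x) (hδ : ∀ j, 0 < δ j)
    (i a b c : Fin 4) (hab : a < b) (hbc : b < c)
    (ha : a ≠ i) (hb : b ≠ i) (hc : c ≠ i)
    (hD : δ a * (x a - x i) + δ b * (x b - x i) + δ c * (x c - x i) ≠ 0) :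
    ¬ (0 < δ a * (x a - x i) / (δ a * (x a - x i) + δ b * (x b - x i) + δ c * (x c - x i)) ∧
       δ b * (x b - x i) / (δ a * (x a - x i) + δ b * (x b - x i) + δ c * (x c - x i)) < 0 ∧
       0 < δ c * (x c - x i) / (δ a * (x a - x i) + δ b * (x b - x i) + δ c * (x c - x i))) ∧
    ¬ (δ a * (x a - x i) / (δ a * (x a - x i) + δ b * (x b - x i) + δ c * (x c - x i)) < 0 ∧
       0 < δ b * (x b - x i) / (δ a * (x a - x i) + δ b * (x b - x i) + δ c * (x c - x i)) ∧
       δ c * (x c - x i) / (δ a * (x a - x i) + δ b * (x b - x i) + δ c * (x c - x i)) < 0) :=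
  stmt_8_general x δ hmono hδ i a b c hab hbc
end

section
/- Let S_j = (x_j, y_j) ∈ ℝ² for j = 1, 2, 3 with x_1 < x_2 < x_3, let δ_1, δ_3 > 0, and assume D = δ_1(x_1 − x_2) + δ_3(x_3 − x_2) ≠ 0. Then the pivot point P_2 of the inner point S_2 satisfies P_2 = λ_1·S_1 + λ_3·S_3 with λ_1 = δ_1(x_1 − x_2)/D, λ_3 = δ_3(x_3 − x_2)/D, λ_1 + λ_3 = 1, and either λ_1 < 0 or λ_1 > 1. That is, P_2 lies on the line through S_1 and S_3 but strictly outside the closed segment between them. -/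
/-!
Writing `u = δ₁ (x₁ - x₂)` and `v = δ₃ (x₃ - x₂)`, both coordinates of the pivot point have the
form `p₂ + (u (p₁ - p₂) + v (p₃ - p₂)) / (u + v)`, which is the affine combination
`u / (u + v) • S₁ + v / (u + v) • S₃`. Since `u < 0 < v`, the coefficient `u / (u + v)` is
negative when `u + v > 0` and exceeds `1` when `u + v < 0`.
-/

section

variable {K : Type*}

theorem add_div_weighted_sub_eq_affine [Field K] {u v : K} (h : u + v ≠ 0) (p₁ p₂ p₃ : K) :
    p₂ + (u * (p₁ - p₂) + v * (p₃ - p₂)) / (u + v) = u / (u + v) * p₁ + v / (u + v) * p₃ := by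
  field_simp
  ring

theorem div_add_neg_or_one_lt [Field K] [LinearOrder K] [IsStrictOrderedRing K] {u v : K}
    (hu : u < 0) (hv : 0 < v) (h : u + v ≠ 0) : u / (u + v) < 0 ∨ 1 < u / (u + v) := by
  rcases h.lt_or_gt with hneg | hpos
  · right
    rw [lt_div_iff_of_neg hneg]
    linarith
  · exact Or.inl (div_neg_of_neg_of_pos hu hpos)

end

/-- With three points x₁ < x₂ < x₃, the pivot point P₂ of the
inner point is the affine combination λ₁·S₁ + λ₃·S₃ with λ₁ + λ₃ = 1 and
λ₁ < 0 or λ₁ > 1: it lies on the line through S₁ and S₃ but strictly outside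
the closed segment between them. -/
theorem stmt_10 (x₁ x₂ x₃ y₁ y₂ y₃ δ₁ δ₃ : ℝ)
    (h12 : x₁ < x₂) (h23 : x₂ < x₃) (hδ₁ : 0 < δ₁) (hδ₃ : 0 < δ₃)
    (hD : δ₁ * (x₁ - x₂) + δ₃ * (x₃ - x₂) ≠ 0) :
    ((x₂ + (δ₁ * (x₁ - x₂) ^ 2 + δ₃ * (x₃ - x₂) ^ 2) /
            (δ₁ * (x₁ - x₂) + δ₃ * (x₃ - x₂)),
      y₂ + (δ₁ * (x₁ - x₂) * (y₁ - y₂) + δ₃ * (x₃ - x₂) * (y₃ - y₂)) /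
            (δ₁ * (x₁ - x₂) + δ₃ * (x₃ - x₂))) : ℝ × ℝ)
      = (δ₁ * (x₁ - x₂) / (δ₁ * (x₁ - x₂) + δ₃ * (x₃ - x₂))) • ((x₁, y₁) : ℝ × ℝ)
        + (δ₃ * (x₃ - x₂) / (δ₁ * (x₁ - x₂) + δ₃ * (x₃ - x₂))) • ((x₃, y₃) : ℝ × ℝ) ∧
    δ₁ * (x₁ - x₂) / (δ₁ * (x₁ - x₂) + δ₃ * (x₃ - x₂)) +
      δ₃ * (x₃ - x₂) / (δ₁ * (x₁ - x₂) + δ₃ * (x₃ - x₂)) = 1 ∧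
    (δ₁ * (x₁ - x₂) / (δ₁ * (x₁ - x₂) + δ₃ * (x₃ - x₂)) < 0 ∨
      1 < δ₁ * (x₁ - x₂) / (δ₁ * (x₁ - x₂) + δ₃ * (x₃ - x₂))) := by
  have hu : δ₁ * (x₁ - x₂) < 0 := mul_neg_of_pos_of_neg hδ₁ (sub_neg.2 h12)
  have hv : 0 < δ₃ * (x₃ - x₂) := mul_pos hδ₃ (sub_pos.2 h23)
  refine ⟨?_, by rw [← add_div, div_self hD], div_add_neg_or_one_lt hu hv hD⟩
  rw [Prod.smul_mk, Prod.smul_mk, Prod.mk_add_mk, smul_eq_mul, smul_eq_mul, smul_eq_mul,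
    smul_eq_mul, ← add_div_weighted_sub_eq_affine hD, ← add_div_weighted_sub_eq_affine hD,
    sq, sq, ← mul_assoc, ← mul_assoc]
end

section
/- Let (χ_j, γ_j) ∈ ℝ² for j = 1,…,n be S_i-centric coordinates, fix an index r with χ_r ≠ 0, set A = Σ_{j=1}^n χ_j², B = Σ_{j=1}^n χ_j, C = Σ_{j=1}^n χ_j γ_j, and assume B ≠ 0. For k ∈ ℕ with k·χ_r + B ≠ 0, setting t_k = k·χ_r/(k·χ_r + B), the pivot point of S_i under k repetitions of S_r satisfies ((k·χ_r² + A)/(k·χ_r + B), (k·χ_r·γ_r + C)/(k·χ_r + B)) = t_k·(χ_r, γ_r) + (1 − t_k)·(A/B, C/B). That is, as S_r is repeated, the pivot point corresponding to S_i moves along the straight line through the original (unrepeated) pivot point (A/B, C/B) and the repeated point (χ_r, γ_r). -/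
/-! Repeating `S_r` adds the weight `k χ_r` at the point `(χ_r, γ_r)` to the weight `B` carried by
the original pivot point `(A/B, C/B)`, so the new pivot point is their weighted average and lies on
the segment between them. -/

theorem inv_smul_add_eq_weighted_average {K V : Type*} [Field K] [AddCommGroup V] [Module K V]
    {w b : K} (hb : b ≠ 0) (hwb : w + b ≠ 0) (p q : V) :
    (w + b)⁻¹ • (w • p + q) = (w / (w + b)) • p + (1 - w / (w + b)) • (b⁻¹ • q) := by
  have hcompl : 1 - w / (w + b) = b / (w + b) := by field_simp; ring
  rw [hcompl, smul_smul, div_mul_eq_mul_div, mul_inv_cancel₀ hb, smul_add, smul_smul,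
    ← div_eq_inv_mul, one_div]

theorem stmt_11_general (n : ℕ) (χ γ : Fin n → ℝ) (r : Fin n)
    (hB : (∑ j, χ j) ≠ 0) (k : ℕ) (hk : (k : ℝ) * χ r + ∑ j, χ j ≠ 0) :
    ((((k : ℝ) * (χ r) ^ 2 + ∑ j, (χ j) ^ 2) / ((k : ℝ) * χ r + ∑ j, χ j),
      ((k : ℝ) * χ r * γ r + ∑ j, χ j * γ j) / ((k : ℝ) * χ r + ∑ j, χ j)) : ℝ × ℝ)
      = ((k : ℝ) * χ r / ((k : ℝ) * χ r + ∑ j, χ j)) • ((χ r, γ r) : ℝ × ℝ)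
        + (1 - (k : ℝ) * χ r / ((k : ℝ) * χ r + ∑ j, χ j)) •
            (((∑ j, (χ j) ^ 2) / (∑ j, χ j),
              (∑ j, χ j * γ j) / (∑ j, χ j)) : ℝ × ℝ) := by
  have hpivot : ∀ x y : ℝ, ((x / (∑ j, χ j), y / (∑ j, χ j)) : ℝ × ℝ)
      = (∑ j, χ j)⁻¹ • (x, y) := fun x y => by simp [div_eq_inv_mul]
  rw [hpivot, ← inv_smul_add_eq_weighted_average hB hk]
  simp only [Prod.smul_mk, Prod.mk_add_mk, smul_eq_mul, div_eq_inv_mul]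
  ring_nf

/-- As S_r is repeated k times, the pivot point of S_i moves along
the straight line through the original pivot point (A/B, C/B) and the repeated
point (χ_r, γ_r): it equals t_k·(χ_r, γ_r) + (1 − t_k)·(A/B, C/B) with
t_k = k·χ_r/(k·χ_r + B). -/
theorem stmt_11 (n : ℕ) (χ γ : Fin n → ℝ) (r : Fin n) (hr : χ r ≠ 0)
    (hB : (∑ j, χ j) ≠ 0) (k : ℕ) (hk : (k : ℝ) * χ r + ∑ j, χ j ≠ 0) :
    ((((k : ℝ) * (χ r) ^ 2 + ∑ j, (χ j) ^ 2) / ((k : ℝ) * χ r + ∑ j, χ j),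
      ((k : ℝ) * χ r * γ r + ∑ j, χ j * γ j) / ((k : ℝ) * χ r + ∑ j, χ j)) : ℝ × ℝ)
      = ((k : ℝ) * χ r / ((k : ℝ) * χ r + ∑ j, χ j)) • ((χ r, γ r) : ℝ × ℝ)
        + (1 - (k : ℝ) * χ r / ((k : ℝ) * χ r + ∑ j, χ j)) •
            (((∑ j, (χ j) ^ 2) / (∑ j, χ j),
              (∑ j, χ j * γ j) / (∑ j, χ j)) : ℝ × ℝ) :=
  stmt_11_general n χ γ r hB k hk
end

section
/- Let S_j = (x_j, y_j) ∈ ℝ² for j = 1,…,n, let δ_1,…,δ_n > 0, fix an index i, and assume Σ_{j=1}^n δ_j(x_j − x_i) ≠ 0. If (m, b) ∈ ℝ² is a global minimizer of the weighted least-squares error E(m, b) = Σ_{j=1}^n δ_j·(m·x_j + b − y_j)², then m·x̃_i + b = ỹ_i, where x̃_i = x_i + (Σ_{j=1}^n δ_j(x_j − x_i)²)/(Σ_{j=1}^n δ_j(x_j − x_i)) and ỹ_i = y_i + (Σ_{j=1}^n δ_j(x_j − x_i)(y_j − y_i))/(Σ_{j=1}^n δ_j(x_j − x_i)). That is, the least-squares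 regression line for the multiset in which each S_j appears δ_j times passes through the pivot point P_i = (x̃_i, ỹ_i). -/
/-!
A global minimizer of the weighted error `E` is a critical point, so the residuals
`rⱼ = m xⱼ + b - yⱼ` satisfy the normal equations `∑ δⱼ rⱼ (u xⱼ + v) = 0` for all `u, v`.
Taking `u = 1, v = -xᵢ` and writing `rⱼ = m (xⱼ - xᵢ) + rᵢ - (yⱼ - yᵢ)` gives
`m A + rᵢ D = C` with `A = ∑ δⱼ (xⱼ - xᵢ)²`, `D = ∑ δⱼ (xⱼ - xᵢ)`, `C = ∑ δⱼ (xⱼ - xᵢ)(yⱼ - yᵢ)`;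
dividing by `D ≠ 0` is the claim.
-/

open Finset

theorem eq_zero_of_forall_nonneg_mul_add_sq_mul {L Q : ℝ} (h : ∀ t : ℝ, 0 ≤ t * L + t ^ 2 * Q) :
    L = 0 := by
  have hmin : IsLocalMin (fun t : ℝ => t * L + t ^ 2 * Q) 0 :=
    Filter.Eventually.of_forall fun t => by simpa using h t
  have hderiv : HasDerivAt (fun t : ℝ => t * L + t ^ 2 * Q) L 0 :=
    (((hasDerivAt_id' 0).mul_const L).add ((hasDerivAt_pow 2 0).mul_const Q)).congr_deriv
      (by simp)
  exact hmin.hasDerivAt_eq_zero hderiv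

section WeightedLeastSquares

variable {ι : Type*} [Fintype ι] (δ x y : ι → ℝ)

theorem sum_weighted_sq_residual_add_mul (m b u v t : ℝ) :
    ∑ j, δ j * ((m + t * u) * x j + (b + t * v) - y j) ^ 2
      = ∑ j, δ j * (m * x j + b - y j) ^ 2
        + t * (2 * ∑ j, δ j * (m * x j + b - y j) * (u * x j + v))
        + t ^ 2 * ∑ j, δ j * (u * x j + v) ^ 2 := by
  simp only [mul_sum, ← sum_add_distrib]
  exact sum_congr rfl fun j _ => by ring

theorem sum_weighted_residual_mul_eq_zero {m b : ℝ}
    (hmin : ∀ m' b' : ℝ,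
      ∑ j, δ j * (m * x j + b - y j) ^ 2 ≤ ∑ j, δ j * (m' * x j + b' - y j) ^ 2)
    (u v : ℝ) :
    ∑ j, δ j * (m * x j + b - y j) * (u * x j + v) = 0 := by
  have h : 2 * ∑ j, δ j * (m * x j + b - y j) * (u * x j + v) = 0 :=
    eq_zero_of_forall_nonneg_mul_add_sq_mul (Q := ∑ j, δ j * (u * x j + v) ^ 2) fun t => by
      have := hmin (m + t * u) (b + t * v)
      rw [sum_weighted_sq_residual_add_mul] at this
      linarith
  linarith

theorem sum_weighted_residual_mul_sub (m b x₀ y₀ : ℝ) :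
    ∑ j, δ j * (m * x j + b - y j) * (x j - x₀)
      = m * ∑ j, δ j * (x j - x₀) ^ 2 + (m * x₀ + b - y₀) * ∑ j, δ j * (x j - x₀)
        - ∑ j, δ j * (x j - x₀) * (y j - y₀) := by
  simp only [mul_sum, ← sum_add_distrib, ← sum_sub_distrib]
  exact sum_congr rfl fun j _ => by ring

end WeightedLeastSquares

theorem stmt_15_general (n : ℕ) (x y δ : Fin n → ℝ) (i : Fin n)
    (hD : (∑ j, δ j * (x j - x i)) ≠ 0) (m b : ℝ)
    (hmin : ∀ m' b' : ℝ,
      ∑ j, δ j * (m * x j + b - y j) ^ 2 ≤ ∑ j, δ j * (m' * x j + b' - y j) ^ 2) :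
    m * (x i + (∑ j, δ j * (x j - x i) ^ 2) / (∑ j, δ j * (x j - x i))) + b
      = y i + (∑ j, δ j * (x j - x i) * (y j - y i)) /
          (∑ j, δ j * (x j - x i)) := by
  have normal : ∑ j, δ j * (m * x j + b - y j) * (x j - x i) = 0 := by
    simpa [sub_eq_add_neg] using sum_weighted_residual_mul_eq_zero δ x y hmin 1 (-x i)
  rw [sum_weighted_residual_mul_sub δ x y m b (x i) (y i)] at normal
  field_simp
  linarith

/-- Any global minimizer (m, b) of the weighted least-squares
error E(m, b) = ∑ δ_j(m·x_j + b − y_j)² satisfies m·x̃_i + b = ỹ_i: the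
weighted regression line passes through the pivot point P_i = (x̃_i, ỹ_i). -/
theorem stmt_15 (n : ℕ) (x y δ : Fin n → ℝ) (hδ : ∀ j, 0 < δ j) (i : Fin n)
    (hD : (∑ j, δ j * (x j - x i)) ≠ 0) (m b : ℝ)
    (hmin : ∀ m' b' : ℝ,
      ∑ j, δ j * (m * x j + b - y j) ^ 2 ≤ ∑ j, δ j * (m' * x j + b' - y j) ^ 2) :
    m * (x i + (∑ j, δ j * (x j - x i) ^ 2) / (∑ j, δ j * (x j - x i))) + b
      = y i + (∑ j, δ j * (x j - x i) * (y j - y i)) /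
          (∑ j, δ j * (x j - x i)) :=
  stmt_15_general n x y δ i hD m b hmin
end
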